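/- Existence and uniqueness for the Volterra equation: under the Lipschitz assumption $|f(x,y_1)-f(x,y_2)| \le C|y_1-y_2|$ and with $u_0(t) = \sum_{k=1}^n \frac{C_k (t-a)^{\gamma - k}}{\Gamma(\gamma - k + 1)} \in L^1[a,b]$, the Volterra integral equation $u(t) = u_0(t) + {}^A I_{a+}^{\alpha+\gamma,\beta} f(t, u(t))$ has a unique solution $u \in L^1[a,b]$. -/

import Mathlib

/-!
For `t ∈ [a, b]` the fractional integral is a Volterra convolution with the kernel
`k(x) = x ^ (α + γ - 1) A(x ^ β)`, which is integrable on `[0, b - a]` because `A` is bounded on the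
closed disc of radius `(b - a) ^ Re β`. In the Bielecki norm `∫ₐᵇ e^{-θt} ‖g t‖ dt` the weight
splits as `e^{-θt} = e^{-θτ} e^{-θ(t-τ)}`, so Tonelli shows that the Picard map
`g ↦ u₀ + k ∗ f(·, g)` is Lipschitz with constant `C ∫₀^{b-a} e^{-θs} ‖k s‖ ds`, which tends to `0`
as `θ → ∞` by dominated convergence. For large `θ` the Banach fixed point theorem in `L¹` of the
weighted measure gives existence and uniqueness; the weighted norm does the work of the
subdivision of `[a, b]` into short subintervals.
-/

open MeasureTheory Set

/-- The generalised fractional integral with analytic kernel `A`. -/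
noncomputable def genInt (a : ℝ) (α β : ℂ) (A : ℂ → ℂ) (f : ℝ → ℂ) (t : ℝ) : ℂ :=
  ∫ τ in a..t, (((t - τ : ℝ) : ℂ) ^ (α - 1)) * A (((t - τ : ℝ) : ℂ) ^ β) * f τ

open Filter Topology
open scoped ENNReal NNReal

noncomputable section

section FixedPoint

variable {X E : Type*} [MeasurableSpace X] [NormedAddCommGroup E] {μ : Measure X}
  {T : (X → E) → X → E} {κ : ℝ≥0}

theorem exists_ae_fixedPoint_of_lintegral_contraction [CompleteSpace E] (hκ : κ < 1)
    (hT : ∀ g, Integrable g μ → Integrable (T g) μ)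
    (hT_lip : ∀ g₁ g₂, Integrable g₁ μ → Integrable g₂ μ →
      ∫⁻ x, ‖T g₁ x - T g₂ x‖ₑ ∂μ ≤ κ * ∫⁻ x, ‖g₁ x - g₂ x‖ₑ ∂μ) :
    ∃ u, Integrable u μ ∧ T u =ᵐ[μ] u := by
  let T₁ : (X →₁[μ] E) → X →₁[μ] E := fun F => (hT F (L1.integrable_coeFn F)).toL1 _
  have hT₁ : ContractingWith κ T₁ := by
    refine ⟨hκ, fun F G => ?_⟩
    rw [L1.edist_def, L1.edist_def]
    simp only [edist_eq_enorm_sub]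
    calc ∫⁻ x, ‖T₁ F x - T₁ G x‖ₑ ∂μ = ∫⁻ x, ‖T F x - T G x‖ₑ ∂μ := by
          refine lintegral_congr_ae ?_
          filter_upwards [Integrable.coeFn_toL1 (hT F (L1.integrable_coeFn F)),
            Integrable.coeFn_toL1 (hT G (L1.integrable_coeFn G))] with x hF hG
          rw [hF, hG]
      _ ≤ κ * ∫⁻ x, ‖F x - G x‖ₑ ∂μ :=
          hT_lip _ _ (L1.integrable_coeFn F) (L1.integrable_coeFn G)
  set F := ContractingWith.fixedPoint T₁ hT₁
  have hfix : T₁ F = F := hT₁.fixedPoint_isFixedPt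
  refine ⟨F, L1.integrable_coeFn F, ?_⟩
  have hTF : ⇑(T₁ F) =ᵐ[μ] T F := (hT F (L1.integrable_coeFn F)).coeFn_toL1
  rw [hfix] at hTF
  exact hTF.symm

theorem ae_eq_of_lintegral_contraction (hκ : κ < 1)
    (hT_lip : ∀ g₁ g₂, Integrable g₁ μ → Integrable g₂ μ →
      ∫⁻ x, ‖T g₁ x - T g₂ x‖ₑ ∂μ ≤ κ * ∫⁻ x, ‖g₁ x - g₂ x‖ₑ ∂μ)
    {u v : X → E} (hu : Integrable u μ) (hv : Integrable v μ)
    (hTu : T u =ᵐ[μ] u) (hTv : T v =ᵐ[μ] v) : v =ᵐ[μ] u := by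
  set D := ∫⁻ x, ‖v x - u x‖ₑ ∂μ
  have hD : D ≤ κ * D := calc
    D = ∫⁻ x, ‖T v x - T u x‖ₑ ∂μ := by
        refine lintegral_congr_ae ?_
        filter_upwards [hTu, hTv] with x hTux hTvx
        rw [hTux, hTvx]
    _ ≤ κ * D := hT_lip _ _ hv hu
  have hD0 : D = 0 := by
    by_contra hne
    have h1 : 1 * D ≤ κ * D := by rwa [one_mul]
    exact (ENNReal.coe_lt_one_iff.2 hκ).not_ge
      ((ENNReal.mul_le_mul_iff_left hne (hv.sub hu).2.ne).1 h1)
  filter_upwards [(lintegral_eq_zero_iff' (hv.sub hu).aestronglyMeasurable.enorm).1 hD0]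
    with x hx
  simpa [sub_eq_zero] using hx

end FixedPoint

def expWeight (θ t : ℝ) : ℝ≥0∞ := ENNReal.ofReal (Real.exp (-(θ * t)))

lemma measurable_expWeight (θ : ℝ) : Measurable (expWeight θ) := by
  unfold expWeight; fun_prop

lemma expWeight_ne_zero (θ t : ℝ) : expWeight θ t ≠ 0 := by
  simp [expWeight, Real.exp_pos]

lemma expWeight_ne_top (θ t : ℝ) : expWeight θ t ≠ ⊤ := ENNReal.ofReal_ne_top

lemma expWeight_add (θ s t : ℝ) : expWeight θ (s + t) = expWeight θ s * expWeight θ t := by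
  rw [expWeight, expWeight, expWeight, ← ENNReal.ofReal_mul (Real.exp_nonneg _), ← Real.exp_add]
  ring_nf

lemma expWeight_antitone {θ : ℝ} (hθ : 0 ≤ θ) : Antitone (expWeight θ) :=
  fun _ _ hst => ENNReal.ofReal_le_ofReal (Real.exp_le_exp.2 (by nlinarith))

lemma expWeight_le_one {θ t : ℝ} (hθ : 0 ≤ θ) (ht : 0 ≤ t) : expWeight θ t ≤ 1 := by
  simpa [expWeight] using expWeight_antitone hθ ht

/-- Functions in `L¹` of this measure carry the Bielecki norm `∫ e^{-θt} ‖g t‖ dt` on `[a, b]`. -/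
def weightedVolume (a b θ : ℝ) : Measure ℝ := (volume.restrict (Icc a b)).withDensity (expWeight θ)

instance (a b θ : ℝ) : SFinite (weightedVolume a b θ) := by
  unfold weightedVolume; infer_instance

section WeightedVolume

variable {a b θ : ℝ}

lemma weightedVolume_absolutelyContinuous :
    weightedVolume a b θ ≪ volume.restrict (Icc a b) :=
  withDensity_absolutelyContinuous _ _

lemma weightedVolume_le_smul (hθ : 0 ≤ θ) :
    weightedVolume a b θ ≤ expWeight θ a • volume.restrict (Icc a b) := by
  rw [weightedVolume, ← withDensity_const]
  refine withDensity_mono ?_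
  filter_upwards [ae_restrict_mem measurableSet_Icc] with t ht
  exact expWeight_antitone hθ ht.1

lemma restrict_le_smul_weightedVolume (hθ : 0 ≤ θ) :
    volume.restrict (Icc a b) ≤ (expWeight θ b)⁻¹ • weightedVolume a b θ := by
  rw [weightedVolume, ← withDensity_smul _ (measurable_expWeight θ)]
  conv_lhs => rw [← withDensity_one (μ := volume.restrict (Icc a b))]
  refine withDensity_mono ?_
  filter_upwards [ae_restrict_mem measurableSet_Icc] with t ht
  calc (1 : ℝ≥0∞) = (expWeight θ b)⁻¹ * expWeight θ b :=
        (ENNReal.inv_mul_cancel (expWeight_ne_zero θ b) (expWeight_ne_top θ b)).symm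
    _ ≤ (expWeight θ b)⁻¹ * expWeight θ t := by gcongr; exact expWeight_antitone hθ ht.2

lemma restrict_absolutelyContinuous_weightedVolume (hθ : 0 ≤ θ) :
    volume.restrict (Icc a b) ≪ weightedVolume a b θ :=
  Measure.absolutelyContinuous_of_le_smul (restrict_le_smul_weightedVolume hθ)

lemma integrable_weightedVolume_iff {E : Type*} [NormedAddCommGroup E] {g : ℝ → E}
    (hθ : 0 ≤ θ) : Integrable g (weightedVolume a b θ) ↔ IntegrableOn g (Icc a b) :=
  ⟨fun hg => (hg.smul_measure (ENNReal.inv_ne_top.2 (expWeight_ne_zero θ b))).mono_measure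
      (restrict_le_smul_weightedVolume hθ),
    fun hg => (hg.smul_measure (expWeight_ne_top θ a)).mono_measure (weightedVolume_le_smul hθ)⟩

lemma lintegral_weightedVolume (φ : ℝ → ℝ≥0∞) :
    ∫⁻ t, φ t ∂weightedVolume a b θ = ∫⁻ t in Icc a b, expWeight θ t * φ t :=
  lintegral_withDensity_eq_lintegral_mul_non_measurable _ (measurable_expWeight θ)
    (ae_of_all _ fun t => (expWeight_ne_top θ t).lt_top) φ

end WeightedVolume

def weightedKernelMass (K : ℝ → ℂ) (d θ : ℝ) : ℝ≥0∞ :=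
  ∫⁻ s in Icc 0 d, expWeight θ s * ‖K s‖ₑ

section WeightedKernelMass

variable {K : ℝ → ℂ} {d θ : ℝ}

lemma weightedKernelMass_lt_top (hθ : 0 ≤ θ) (hK : IntegrableOn K (Icc 0 d)) :
    weightedKernelMass K d θ < ⊤ := by
  refine lt_of_le_of_lt (setLIntegral_mono' measurableSet_Icc fun s hs => ?_) hK.2
  exact mul_le_of_le_one_left zero_le (expWeight_le_one hθ hs.1)

lemma tendsto_weightedKernelMass (hK_meas : Measurable K) (hK : IntegrableOn K (Icc 0 d)) :
    Tendsto (weightedKernelMass K d) atTop (𝓝 0) := by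
  have hlim := tendsto_lintegral_filter_of_dominated_convergence (μ := volume.restrict (Icc 0 d))
    (F := fun θ s => expWeight θ s * ‖K s‖ₑ) (f := 0) (fun s => ‖K s‖ₑ)
    (Eventually.of_forall fun θ => (measurable_expWeight θ).mul hK_meas.enorm)
    ((eventually_ge_atTop 0).mono fun θ hθ => by
      filter_upwards [ae_restrict_mem measurableSet_Icc] with s hs
      exact mul_le_of_le_one_left zero_le (expWeight_le_one hθ hs.1))
    hK.2.ne ?_
  · rw [Pi.zero_def, lintegral_zero] at hlim
    exact hlim
  · have hpos : ∀ᵐ s ∂volume.restrict (Icc 0 d), s ≠ 0 :=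
      ae_restrict_of_ae (Measure.ae_ne volume 0)
    filter_upwards [ae_restrict_mem measurableSet_Icc, hpos] with s hs hs0
    have hexp : Tendsto (fun θ : ℝ => Real.exp (-(θ * s))) atTop (𝓝 0) :=
      Real.tendsto_exp_atBot.comp
        (tendsto_neg_atTop_atBot.comp (tendsto_id.atTop_mul_const (hs.1.lt_of_ne' hs0)))
    have hlim_s := ENNReal.Tendsto.mul_const (ENNReal.tendsto_ofReal hexp)
      (Or.inr (enorm_ne_top (x := K s)))
    rwa [ENNReal.ofReal_zero, zero_mul] at hlim_s

end WeightedKernelMass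

section VolterraConv

variable {E : Type*} [NormedAddCommGroup E] [NormedSpace ℂ E]

def volterraConv (a : ℝ) (K : ℝ → ℂ) (h : ℝ → E) (t : ℝ) : E :=
  ∫ τ in Ioc a t, K (t - τ) • h τ

def volterraIntegrand (a : ℝ) (K : ℝ → ℂ) (h : ℝ → E) (p : ℝ × ℝ) : E :=
  (Ioc a p.1).indicator (fun τ => K (p.1 - τ) • h τ) p.2

variable {a b θ : ℝ} {K : ℝ → ℂ} {h : ℝ → E}

lemma volterraConv_eq_integral_volterraIntegrand {t : ℝ} (ht : t ≤ b) :
    volterraConv a K h t = ∫ τ, volterraIntegrand a K h (t, τ) ∂volume.restrict (Icc a b) := by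
  simp only [volterraIntegrand]
  rw [integral_indicator measurableSet_Ioc,
    Measure.restrict_restrict measurableSet_Ioc,
    inter_eq_left.2 (Ioc_subset_Icc_self.trans (Icc_subset_Icc_right ht))]
  rfl

lemma aestronglyMeasurable_volterraIntegrand {ρ : Measure ℝ} [SFinite ρ] (hK : Measurable K)
    (hh : AEStronglyMeasurable h (volume.restrict (Icc a b))) :
    AEStronglyMeasurable (volterraIntegrand a K h) (ρ.prod (volume.restrict (Icc a b))) := by
  have hset : MeasurableSet {p : ℝ × ℝ | a < p.2 ∧ p.2 ≤ p.1} :=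
    (measurableSet_lt measurable_const measurable_snd).inter
      (measurableSet_le measurable_snd measurable_fst)
  exact ((hK.comp (measurable_fst.sub measurable_snd)).aestronglyMeasurable.smul
    hh.comp_snd).indicator hset

lemma expWeight_mul_enorm_volterraIntegrand_le {t : ℝ} (ht : t ≤ b) (τ : ℝ) :
    expWeight θ t * ‖volterraIntegrand a K h (t, τ)‖ₑ ≤
      expWeight θ τ * ‖h τ‖ₑ *
        (Icc 0 (b - a)).indicator (fun s => expWeight θ s * ‖K s‖ₑ) (t - τ) := by
  by_cases hτ : τ ∈ Ioc a t
  · have hs : t - τ ∈ Icc 0 (b - a) := ⟨by linarith [hτ.2], by linarith [hτ.1]⟩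
    rw [volterraIntegrand, indicator_of_mem hτ, indicator_of_mem hs, enorm_smul,
      ← add_sub_cancel τ t, expWeight_add, add_sub_cancel]
    exact le_of_eq (by ring)
  · simp [volterraIntegrand, indicator_of_notMem hτ]

lemma lintegral_enorm_volterraIntegrand_le (hK : Measurable K)
    (hh : AEStronglyMeasurable h (volume.restrict (Icc a b))) :
    ∫⁻ p, ‖volterraIntegrand a K h p‖ₑ ∂(weightedVolume a b θ).prod (volume.restrict (Icc a b))
      ≤ weightedKernelMass K (b - a) θ * ∫⁻ t, ‖h t‖ₑ ∂weightedVolume a b θ := by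
  set G := (Icc 0 (b - a)).indicator (fun s => expWeight θ s * ‖K s‖ₑ)
  have hG : Measurable G :=
    ((measurable_expWeight θ).mul hK.enorm).indicator measurableSet_Icc
  have hinner : ∀ τ, ∫⁻ t, ‖volterraIntegrand a K h (t, τ)‖ₑ ∂weightedVolume a b θ ≤
      weightedKernelMass K (b - a) θ * (expWeight θ τ * ‖h τ‖ₑ) := fun τ => calc
    _ = ∫⁻ t in Icc a b, expWeight θ t * ‖volterraIntegrand a K h (t, τ)‖ₑ :=
        lintegral_weightedVolume _
    _ ≤ ∫⁻ t in Icc a b, expWeight θ τ * ‖h τ‖ₑ * G (t - τ) :=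
        setLIntegral_mono' measurableSet_Icc fun t ht =>
          expWeight_mul_enorm_volterraIntegrand_le ht.2 τ
    _ ≤ ∫⁻ t, expWeight θ τ * ‖h τ‖ₑ * G (t - τ) := setLIntegral_le_lintegral _ _
    _ = expWeight θ τ * ‖h τ‖ₑ * ∫⁻ s, G s := by
        rw [lintegral_const_mul' _ _ (ENNReal.mul_ne_top (expWeight_ne_top θ τ) enorm_ne_top),
          lintegral_sub_right_eq_self G τ]
    _ = _ := by rw [lintegral_indicator measurableSet_Icc, mul_comm]; rfl
  calc _ = ∫⁻ τ in Icc a b, ∫⁻ t, ‖volterraIntegrand a K h (t, τ)‖ₑ ∂weightedVolume a b θ :=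
        lintegral_prod_symm _ (aestronglyMeasurable_volterraIntegrand hK hh).enorm
    _ ≤ ∫⁻ τ in Icc a b, weightedKernelMass K (b - a) θ * (expWeight θ τ * ‖h τ‖ₑ) :=
        lintegral_mono hinner
    _ = _ := by
        rw [lintegral_const_mul'' (f := fun τ => expWeight θ τ * ‖h τ‖ₑ) _
            ((measurable_expWeight θ).aemeasurable.mul hh.enorm),
          lintegral_weightedVolume]

lemma integrable_volterraIntegrand (hθ : 0 ≤ θ) (hK : Measurable K)
    (hK_int : IntegrableOn K (Icc 0 (b - a))) (hh : IntegrableOn h (Icc a b)) :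
    Integrable (volterraIntegrand a K h)
      ((weightedVolume a b θ).prod (volume.restrict (Icc a b))) :=
  ⟨aestronglyMeasurable_volterraIntegrand hK hh.1,
    (lintegral_enorm_volterraIntegrand_le hK hh.1).trans_lt (ENNReal.mul_lt_top
      (weightedKernelMass_lt_top hθ hK_int) ((integrable_weightedVolume_iff hθ).2 hh).2)⟩

lemma ae_le_weightedVolume : ∀ᵐ t ∂weightedVolume a b θ, t ≤ b :=
  weightedVolume_absolutelyContinuous.ae_le
    ((ae_restrict_mem measurableSet_Icc).mono fun _ ht => ht.2)

lemma lintegral_enorm_volterraConv_le (hK : Measurable K)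
    (hh : AEStronglyMeasurable h (volume.restrict (Icc a b))) :
    ∫⁻ t, ‖volterraConv a K h t‖ₑ ∂weightedVolume a b θ
      ≤ weightedKernelMass K (b - a) θ * ∫⁻ t, ‖h t‖ₑ ∂weightedVolume a b θ := calc
  _ ≤ ∫⁻ t, ∫⁻ τ, ‖volterraIntegrand a K h (t, τ)‖ₑ ∂volume.restrict (Icc a b)
        ∂weightedVolume a b θ := by
      refine lintegral_mono_ae ?_
      filter_upwards [ae_le_weightedVolume] with t ht
      rw [volterraConv_eq_integral_volterraIntegrand ht]
      exact enorm_integral_le_lintegral_enorm _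
  _ = _ := (lintegral_prod _ (aestronglyMeasurable_volterraIntegrand hK hh).enorm).symm
  _ ≤ _ := lintegral_enorm_volterraIntegrand_le hK hh

lemma integrable_volterraConv (hθ : 0 ≤ θ) (hK : Measurable K)
    (hK_int : IntegrableOn K (Icc 0 (b - a))) (hh : IntegrableOn h (Icc a b)) :
    Integrable (volterraConv a K h) (weightedVolume a b θ) := by
  refine (integrable_volterraIntegrand hθ hK hK_int hh).integral_prod_left.congr ?_
  filter_upwards [ae_le_weightedVolume] with t ht
  exact (volterraConv_eq_integral_volterraIntegrand ht).symm

lemma volterraConv_sub (hθ : 0 ≤ θ) (hK : Measurable K)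
    (hK_int : IntegrableOn K (Icc 0 (b - a))) {h₁ h₂ : ℝ → E}
    (hh₁ : IntegrableOn h₁ (Icc a b)) (hh₂ : IntegrableOn h₂ (Icc a b)) :
    ∀ᵐ t ∂weightedVolume a b θ,
      volterraConv a K h₁ t - volterraConv a K h₂ t = volterraConv a K (h₁ - h₂) t := by
  filter_upwards [(integrable_volterraIntegrand hθ hK hK_int hh₁).prod_right_ae,
    (integrable_volterraIntegrand hθ hK hK_int hh₂).prod_right_ae, ae_le_weightedVolume]
    with t hi₁ hi₂ ht
  simp only [volterraConv_eq_integral_volterraIntegrand ht, ← integral_sub hi₁ hi₂]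
  congr 1 with τ
  simp only [volterraIntegrand, Pi.sub_apply, smul_sub, indicator_sub]

end VolterraConv

section Picard

variable {E : Type*} [NormedAddCommGroup E] [NormedSpace ℂ E]
  {a b θ : ℝ} {K : ℝ → ℂ} {L : ℝ≥0} {f : ℝ → E → E} {u₀ : ℝ → E}

def picardMap (a : ℝ) (K : ℝ → ℂ) (f : ℝ → E → E) (u₀ g : ℝ → E) (t : ℝ) : E :=
  u₀ t + volterraConv a K (fun s => f s (g s)) t

lemma integrable_picardMap (hθ : 0 ≤ θ) (hK : Measurable K)
    (hK_int : IntegrableOn K (Icc 0 (b - a)))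
    (hf_int : ∀ u, IntegrableOn u (Icc a b) → IntegrableOn (fun s => f s (u s)) (Icc a b))
    (hu₀ : IntegrableOn u₀ (Icc a b)) {g : ℝ → E} (hg : Integrable g (weightedVolume a b θ)) :
    Integrable (picardMap a K f u₀ g) (weightedVolume a b θ) :=
  ((integrable_weightedVolume_iff hθ).2 hu₀).add
    (integrable_volterraConv hθ hK hK_int (hf_int g ((integrable_weightedVolume_iff hθ).1 hg)))

lemma lintegral_enorm_picardMap_sub_le (hθ : 0 ≤ θ) (hK : Measurable K)
    (hK_int : IntegrableOn K (Icc 0 (b - a))) (hf : ∀ x, LipschitzWith L (f x))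
    (hf_int : ∀ u, IntegrableOn u (Icc a b) → IntegrableOn (fun s => f s (u s)) (Icc a b))
    {g₁ g₂ : ℝ → E} (hg₁ : Integrable g₁ (weightedVolume a b θ))
    (hg₂ : Integrable g₂ (weightedVolume a b θ)) :
    ∫⁻ t, ‖picardMap a K f u₀ g₁ t - picardMap a K f u₀ g₂ t‖ₑ ∂weightedVolume a b θ ≤
      L * weightedKernelMass K (b - a) θ * ∫⁻ t, ‖g₁ t - g₂ t‖ₑ ∂weightedVolume a b θ := by
  have hfg₁ := hf_int g₁ ((integrable_weightedVolume_iff hθ).1 hg₁)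
  have hfg₂ := hf_int g₂ ((integrable_weightedVolume_iff hθ).1 hg₂)
  calc _ = ∫⁻ t, ‖volterraConv a K (fun s => f s (g₁ s) - f s (g₂ s)) t‖ₑ
          ∂weightedVolume a b θ := by
        refine lintegral_congr_ae ?_
        filter_upwards [volterraConv_sub hθ hK hK_int hfg₁ hfg₂] with t ht
        rw [picardMap, picardMap, add_sub_add_left_eq_sub, ht]
        rfl
    _ ≤ weightedKernelMass K (b - a) θ *
          ∫⁻ t, ‖f t (g₁ t) - f t (g₂ t)‖ₑ ∂weightedVolume a b θ :=
        lintegral_enorm_volterraConv_le hK (hfg₁.1.sub hfg₂.1)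
    _ ≤ weightedKernelMass K (b - a) θ * ∫⁻ t, L * ‖g₁ t - g₂ t‖ₑ ∂weightedVolume a b θ := by
        gcongr with t
        simpa only [edist_eq_enorm_sub] using hf t (g₁ t) (g₂ t)
    _ = _ := by
        rw [lintegral_const_mul' _ _ ENNReal.coe_ne_top, mul_left_comm, mul_assoc]

theorem exists_unique_volterraConv_solution [CompleteSpace E] (hK : Measurable K)
    (hK_int : IntegrableOn K (Icc 0 (b - a))) (hf : ∀ x, LipschitzWith L (f x))
    (hf_int : ∀ u, IntegrableOn u (Icc a b) → IntegrableOn (fun s => f s (u s)) (Icc a b))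
    (hu₀ : IntegrableOn u₀ (Icc a b)) :
    ∃ u : ℝ → E, IntegrableOn u (Icc a b) ∧
      (∀ᵐ t ∂volume.restrict (Icc a b), u t = u₀ t + volterraConv a K (fun s => f s (u s)) t) ∧
      ∀ v : ℝ → E, IntegrableOn v (Icc a b) →
        (∀ᵐ t ∂volume.restrict (Icc a b),
          v t = u₀ t + volterraConv a K (fun s => f s (v s)) t) →
        v =ᵐ[volume.restrict (Icc a b)] u := by
  have hlim : Tendsto (fun θ => (L : ℝ≥0∞) * weightedKernelMass K (b - a) θ) atTop (𝓝 0) := by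
    simpa using ENNReal.Tendsto.const_mul (tendsto_weightedKernelMass hK hK_int)
      (Or.inr ENNReal.coe_ne_top)
  obtain ⟨θ, hθ, hκ⟩ := ((eventually_ge_atTop 0).and (hlim.eventually_lt_const one_pos)).exists
  set κ := ((L : ℝ≥0∞) * weightedKernelMass K (b - a) θ).toNNReal
  have hκ_coe : (κ : ℝ≥0∞) = L * weightedKernelMass K (b - a) θ :=
    ENNReal.coe_toNNReal (hκ.trans ENNReal.one_lt_top).ne
  have hκ1 : κ < 1 := by rwa [← ENNReal.coe_lt_one_iff, hκ_coe]
  have hT_lip (g₁ g₂ : ℝ → E) (hg₁ : Integrable g₁ (weightedVolume a b θ))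
      (hg₂ : Integrable g₂ (weightedVolume a b θ)) :
      ∫⁻ t, ‖picardMap a K f u₀ g₁ t - picardMap a K f u₀ g₂ t‖ₑ ∂weightedVolume a b θ ≤
        κ * ∫⁻ t, ‖g₁ t - g₂ t‖ₑ ∂weightedVolume a b θ := by
    rw [hκ_coe]
    exact lintegral_enorm_picardMap_sub_le hθ hK hK_int hf hf_int hg₁ hg₂
  obtain ⟨u, hu, hTu⟩ := exists_ae_fixedPoint_of_lintegral_contraction hκ1
    (fun _ => integrable_picardMap hθ hK hK_int hf_int hu₀) hT_lip
  have hac := restrict_absolutelyContinuous_weightedVolume (a := a) (b := b) hθ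
  refine ⟨u, (integrable_weightedVolume_iff hθ).1 hu, hac.ae_le (hTu.mono fun t ht => ht.symm),
    fun v hv hv_sol => hac.ae_le ?_⟩
  refine ae_eq_of_lintegral_contraction hκ1 hT_lip hu ((integrable_weightedVolume_iff hθ).2 hv)
    hTu ?_
  exact weightedVolume_absolutelyContinuous.ae_le (hv_sol.mono fun t ht => ht.symm)

end Picard

/-- The kernel `x ^ (σ - 1) A (x ^ β)` of `genInt`, cut off outside `(0, d]`, the range of `t - τ`
for `a < τ ≤ t ≤ a + d`. -/
def fracKernel (d : ℝ) (σ β : ℂ) (A : ℂ → ℂ) : ℝ → ℂ :=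
  (Ioc 0 d).indicator fun x => (x : ℂ) ^ (σ - 1) * A ((x : ℂ) ^ β)

section FracKernel

variable {d : ℝ} {σ β : ℂ} {A : ℂ → ℂ}

lemma ofReal_cpow_mem_closedBall {x : ℝ} (hβ : 0 ≤ β.re) (hx : x ∈ Ioc 0 d) :
    (x : ℂ) ^ β ∈ Metric.closedBall (0 : ℂ) (d ^ β.re) := by
  rw [mem_closedBall_zero_iff, Complex.norm_cpow_eq_rpow_re_of_pos hx.1]
  exact Real.rpow_le_rpow hx.1.le hx.2 hβ

lemma continuousOn_ofReal_cpow (c : ℂ) : ContinuousOn (fun x : ℝ => (x : ℂ) ^ c) (Ioi 0) :=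
  fun x hx => (Complex.continuousAt_ofReal_cpow_const x c (Or.inr hx.ne')).continuousWithinAt

lemma measurable_fracKernel (hβ : 0 ≤ β.re)
    (hA : ContinuousOn A (Metric.closedBall 0 (d ^ β.re))) :
    Measurable (fracKernel d σ β A) := by
  rw [fracKernel, ← piecewise_eq_indicator]
  refine ContinuousOn.measurable_piecewise ?_ continuousOn_const measurableSet_Ioc
  exact ((continuousOn_ofReal_cpow _).mono Ioc_subset_Ioi_self).mul
    (hA.comp ((continuousOn_ofReal_cpow _).mono Ioc_subset_Ioi_self)
      fun _ hx => ofReal_cpow_mem_closedBall hβ hx)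

lemma integrableOn_fracKernel (hσ : 0 < σ.re) (hβ : 0 ≤ β.re)
    (hA : ContinuousOn A (Metric.closedBall 0 (d ^ β.re))) :
    IntegrableOn (fracKernel d σ β A) (Icc 0 d) := by
  obtain ⟨M, hM⟩ := (isCompact_closedBall (0 : ℂ) (d ^ β.re)).exists_bound_of_continuousOn hA
  have hbound : IntegrableOn (fun x : ℝ => M * x ^ (σ.re - 1)) (Ioc 0 d) :=
    ((intervalIntegral.intervalIntegrable_rpow' (by linarith)).1).const_mul M
  rw [integrableOn_Icc_iff_integrableOn_Ioc]
  refine hbound.mono' ((measurable_fracKernel hβ hA).aestronglyMeasurable) ?_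
  filter_upwards [ae_restrict_mem measurableSet_Ioc] with x hx
  rw [fracKernel, indicator_of_mem hx, norm_mul, Complex.norm_cpow_eq_rpow_re_of_pos hx.1,
    Complex.sub_re, Complex.one_re, mul_comm M]
  exact mul_le_mul_of_nonneg_left (hM _ (ofReal_cpow_mem_closedBall hβ hx))
    (Real.rpow_nonneg hx.1.le _)

lemma genInt_eq_volterraConv {a b t : ℝ} (h : ℝ → ℂ) (ht : t ∈ Icc a b) :
    genInt a σ β A h t = volterraConv a (fracKernel (b - a) σ β A) h t := by
  rw [genInt, intervalIntegral.integral_of_le ht.1, volterraConv]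
  refine setIntegral_congr_ae measurableSet_Ioc ?_
  filter_upwards [Measure.ae_ne volume t] with τ hτt hτ
  have hx : t - τ ∈ Ioc 0 (b - a) :=
    ⟨sub_pos.2 (hτ.2.lt_of_ne hτt), by linarith [hτ.1, ht.2]⟩
  rw [fracKernel, indicator_of_mem hx, smul_eq_mul]

end FracKernel

end

theorem volterra_existence_uniqueness_general (a b : ℝ)
    (α γ β : ℂ) (hα : 0 < α.re) (hγ : 0 < γ.re) (hβ : 0 ≤ β.re)
    (R : ℝ) (hR : (b - a) ^ β.re < R)
    (A : ℂ → ℂ) (hA : AnalyticOn ℂ A (Metric.ball 0 R))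
    (u₀ : ℝ → ℂ)
    (hu₀L1 : IntegrableOn u₀ (Set.Icc a b))
    (C : ℝ)
    (f : ℝ → ℂ → ℂ)
    (hLip : ∀ x : ℝ, ∀ y₁ y₂ : ℂ, ‖f x y₁ - f x y₂‖ ≤ C * ‖y₁ - y₂‖)
    (hmeas : ∀ u : ℝ → ℂ, IntegrableOn u (Set.Icc a b) →
      IntegrableOn (fun s => f s (u s)) (Set.Icc a b)) :
    ∃ u : ℝ → ℂ, IntegrableOn u (Set.Icc a b) ∧
      (∀ᵐ t ∂(volume.restrict (Set.Icc a b)),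
        u t = u₀ t + genInt a (α + γ) β A (fun s => f s (u s)) t) ∧
      ∀ v : ℝ → ℂ, IntegrableOn v (Set.Icc a b) →
        (∀ᵐ t ∂(volume.restrict (Set.Icc a b)),
          v t = u₀ t + genInt a (α + γ) β A (fun s => f s (v s)) t) →
        (∀ᵐ t ∂(volume.restrict (Set.Icc a b)), v t = u t) := by
  have hσ : 0 < (α + γ).re := by rw [Complex.add_re]; positivity
  have hA' : ContinuousOn A (Metric.closedBall 0 ((b - a) ^ β.re)) :=
    hA.continuousOn.mono (Metric.closedBall_subset_ball hR)
  have hf : ∀ x, LipschitzWith C.toNNReal (f x) := fun x =>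
    LipschitzWith.of_dist_le' fun y₁ y₂ => by simpa only [dist_eq_norm] using hLip x y₁ y₂
  have hgen (h : ℝ → ℂ) : ∀ᵐ t ∂volume.restrict (Icc a b),
      genInt a (α + γ) β A h t = volterraConv a (fracKernel (b - a) (α + γ) β A) h t := by
    filter_upwards [ae_restrict_mem measurableSet_Icc] with t ht
    exact genInt_eq_volterraConv h ht
  obtain ⟨u, hu, hu_sol, hu_unique⟩ := exists_unique_volterraConv_solution
    (measurable_fracKernel hβ hA') (integrableOn_fracKernel hσ hβ hA') hf hmeas hu₀L1
  refine ⟨u, hu, ?_, fun v hv hv_sol => hu_unique v hv ?_⟩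
  · filter_upwards [hu_sol, hgen fun s => f s (u s)] with t ht hgen_t
    rw [ht, hgen_t]
  · filter_upwards [hv_sol, hgen fun s => f s (v s)] with t ht hgen_t
    rw [ht, hgen_t]

/-- Existence and uniqueness for the Volterra integral equation
`u(t) = ∑_{k=1}^n C_k (t-a)^{γ-k}/Γ(γ-k+1) + ᴬI_{a+}^{α+γ,β} f(t, u(t))`
under a Lipschitz assumption on `f` in the second variable: there is a solution
`u ∈ L¹[a,b]`, unique up to almost-everywhere equality. -/
theorem volterra_existence_uniqueness (a b : ℝ) (hab : a < b)
    (α γ β : ℂ) (hα : 0 < α.re) (hγ : 0 < γ.re) (hβ : 0 ≤ β.re)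
    (R : ℝ) (hR : (b - a) ^ β.re < R)
    (A : ℂ → ℂ) (hA : AnalyticOn ℂ A (Metric.ball 0 R))
    (n : ℕ) (hn : n = ⌈γ.re⌉₊) (Ck : ℕ → ℂ)
    (u₀ : ℝ → ℂ)
    (hu₀def : ∀ t : ℝ, u₀ t =
      ∑ k ∈ Finset.Icc 1 n,
        Ck k * ((t - a : ℝ) : ℂ) ^ (γ - k) / Complex.Gamma (γ - k + 1))
    (hu₀L1 : IntegrableOn u₀ (Set.Icc a b))
    (C : ℝ) (hC : 0 ≤ C)
    (f : ℝ → ℂ → ℂ)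
    (hLip : ∀ x : ℝ, ∀ y₁ y₂ : ℂ, ‖f x y₁ - f x y₂‖ ≤ C * ‖y₁ - y₂‖)
    (hmeas : ∀ u : ℝ → ℂ, IntegrableOn u (Set.Icc a b) →
      IntegrableOn (fun s => f s (u s)) (Set.Icc a b)) :
    ∃ u : ℝ → ℂ, IntegrableOn u (Set.Icc a b) ∧
      (∀ᵐ t ∂(volume.restrict (Set.Icc a b)),
        u t = u₀ t + genInt a (α + γ) β A (fun s => f s (u s)) t) ∧
      ∀ v : ℝ → ℂ, IntegrableOn v (Set.Icc a b) →
        (∀ᵐ t ∂(volume.restrict (Set.Icc a b)),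
          v t = u₀ t + genInt a (α + γ) β A (fun s => f s (v s)) t) →
        (∀ᵐ t ∂(volume.restrict (Set.Icc a b)), v t = u t) :=
  volterra_existence_uniqueness_general a b α γ β hα hγ hβ R hR A hA u₀ hu₀L1 C f hLip hmeas
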